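/- Let G_R be the canonical distance graph of a region R with respect to a bound function α, and let x₁, x₂ be two clocks bounded in R (i.e., a constraint x ≤ c holds in R for some constant c, for each of them). For every distance graph G: if in min(G_R, G) the weight of the edge x₁ → x₂ comes from G (i.e., is strictly smaller than the corresponding weight in G_R), then x₁ → x₂ → x₁ is a negative cycle in min(G_R, G). -/

import Mathlib

attribute [local instance] Classical.propDecidable

noncomputable section

namespace TAform

/-! ### Weights `(≼, c)` with `c ∈ ℤ ∪ {∞}` -/

/-- Values in `ℤ ∪ {∞}`: `none` represents `∞`. -/
abbrev OVal := Option ℤ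

/-- Addition on `ℤ ∪ {∞}`. -/
def ovAdd : OVal → OVal → OVal
  | some a, some b => some (a + b)
  | _, _ => none

/-- Strict order on `ℤ ∪ {∞}`. -/
def ovLt : OVal → OVal → Prop
  | some a, some b => a < b
  | some _, none => True
  | none, _ => False

/-- A weight `(≼, c)`: `strict = true` means `≼` is `<`, `strict = false` means `≤`;
`val ∈ ℤ ∪ {∞}`. -/
structure Weight where
  strict : Bool
  val : OVal

/-- The weight `(<, ∞)`. -/
def winf : Weight := ⟨true, none⟩

/-- The weight `(≤, c)`. -/
def wle (c : ℤ) : Weight := ⟨false, some c⟩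

/-- The weight `(<, c)`. -/
def wlt (c : ℤ) : Weight := ⟨true, some c⟩

/-- Addition: `(≼₁,c₁)+(≼₂,c₂) = (≼,c₁+c₂)` where `≼` is `<` iff `≼₁` or `≼₂` is `<`. -/
def Weight.add (a b : Weight) : Weight := ⟨a.strict || b.strict, ovAdd a.val b.val⟩

/-- Order: `(≼₁,c₁) < (≼₂,c₂)` iff `c₁ < c₂`, or `c₁ = c₂`, `≼₁` is `<` and `≼₂` is `≤`. -/
def Weight.lt (a b : Weight) : Prop :=
  ovLt a.val b.val ∨ (a.val = b.val ∧ a.strict = true ∧ b.strict = false)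

def Weight.le (a b : Weight) : Prop := Weight.lt a b ∨ a = b

/-- Minus: `−(≼,c) = (≼,−c)`. -/
def Weight.neg (w : Weight) : Weight := ⟨w.strict, Option.map (fun c => -c) w.val⟩

/-- Floor: `⌊(<,c)⌋ = (≤,c−1)` and `⌊(≤,c)⌋ = (≤,c)`. -/
def Weight.floor (w : Weight) : Weight :=
  ⟨false, if w.strict then Option.map (fun c => c - 1) w.val else w.val⟩

/-- Ceiling (on integer-valued weights): `⌈(≤,c)⌉ = (≤,c)` and `⌈(<,c)⌉ = (<,c+1)`. -/
def Weight.ceil (w : Weight) : Weight :=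
  if w.strict then ⟨true, Option.map (fun c => c + 1) w.val⟩ else w

/-- Maximum of two weights. -/
def Weight.max (a b : Weight) : Weight := if Weight.lt a b then b else a

/-- Satisfaction: `d ≼ c` for a real number `d` and a weight `(≼,c)`. -/
def Weight.sat (w : Weight) (d : ℝ) : Prop :=
  match w.val with
  | none => True
  | some c => if w.strict then d < (c : ℝ) else d ≤ (c : ℝ)

/-! ### Distance graphs and their semantics -/

/-- Vertices: clocks of `X` together with the special vertex `x₀` (represented by `none`). -/
abbrev Vtx (X : Type*) := Option X

/-- A distance graph: a weight for every ordered pair of vertices.  The edge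
`a →^{≼ c} b` represents the constraint `v b − v a ≼ c`. -/
abbrev DGraph (X : Type*) := Vtx X → Vtx X → Weight

/-- A clock valuation. -/
abbrev Val (X : Type*) := X → ℝ

/-- The valuation is nonnegative (clock valuations map into `ℝ≥0`). -/
def Nonneg {X : Type*} (v : Val X) : Prop := ∀ x, 0 ≤ v x

/-- Extension of a valuation to all vertices, sending `x₀` to `0`. -/
def extV {X : Type*} (v : Val X) : Vtx X → ℝ
  | none => 0
  | some x => v x

/-- Semantics of a distance graph: the set of nonnegative clock valuations
(with `x₀ = 0`) satisfying all edge constraints. -/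
def sem {X : Type*} (G : DGraph X) : Set (Val X) :=
  { v | Nonneg v ∧ ∀ a b, (G a b).sat (extV v b - extV v a) }

/-- Weight of the path `a :: l ++ [b]` in `G` (sum of the weights of its edges). -/
def pathWeight {X : Type*} (G : DGraph X) : Vtx X → List (Vtx X) → Vtx X → Weight
  | a, [], b => G a b
  | a, c :: l, b => (G a c).add (pathWeight G c l b)

/-- `G` has only positive cycles: no cycle has weight at most `(<,0)`. -/
def OnlyPositiveCycles {X : Type*} (G : DGraph X) : Prop :=
  ∀ (a : Vtx X) (l : List (Vtx X)), ¬ (pathWeight G a l a).le (wlt 0)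

/-- Canonical form: the weight of the edge from `a` to `b` is a lower bound of the
weights of all paths from `a` to `b`. -/
def PathCanonical {X : Type*} (G : DGraph X) : Prop :=
  ∀ (a b : Vtx X) (l : List (Vtx X)), (G a b).le (pathWeight G a l b)

/-- The weight `w` bounds the difference `v b − v a` over all `v ∈ S`. -/
def Bounds {X : Type*} (S : Set (Val X)) (a b : Vtx X) (w : Weight) : Prop :=
  ∀ v ∈ S, w.sat (extV v b - extV v a)

/-- `G` is the canonical distance graph of the set `S`: it represents `S` and each of
its edge weights is the least weight bounding the corresponding difference over `S`
(equivalently, for sets defined by clock constraints, the lower bound of the weights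
of paths between its endpoints). -/
def IsCanonGraph {X : Type*} (G : DGraph X) (S : Set (Val X)) : Prop :=
  sem G = S ∧ ∀ a b w, Bounds S a b w → (G a b).le w

/-- A zone: a set of valuations defined by a conjunction of constraints of the form
`x − y # c` or `x # c`, i.e. the set represented by some distance graph. -/
def IsZone {X : Type*} (Z : Set (Val X)) : Prop := ∃ G : DGraph X, sem G = Z

/-! ### Regions and closure -/

/-- Region equivalence with respect to the bound function `α`: same integer parts
(or both above the bound), same set of clocks with zero fractional part, and the
same ordering of fractional parts of bounded clocks. -/
def regEq {X : Type*} (α : X → ℕ) (v w : Val X) : Prop :=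
  (∀ x, ((α x : ℝ) < v x ∧ (α x : ℝ) < w x) ∨
    (⌊v x⌋ = ⌊w x⌋ ∧ (Int.fract (v x) = 0 ↔ Int.fract (w x) = 0))) ∧
  (∀ x y, v x ≤ (α x : ℝ) → v y ≤ (α y : ℝ) →
    (Int.fract (v x) ≤ Int.fract (v y) ↔ Int.fract (w x) ≤ Int.fract (w y)))

/-- A region with respect to `α`: an equivalence class of region equivalence
(inside the nonnegative valuations). -/
def IsRegion {X : Type*} (α : X → ℕ) (R : Set (Val X)) : Prop :=
  ∃ v : Val X, Nonneg v ∧ R = { w | Nonneg w ∧ regEq α v w }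

/-- Closure abstraction: the union of the regions (w.r.t. `α`) intersecting `S`. -/
def Closure {X : Type*} (α : X → ℕ) (S : Set (Val X)) : Set (Val X) :=
  ⋃₀ { R | IsRegion α R ∧ (R ∩ S).Nonempty }

/-! ### LU-bounds and the `Extra⁺_LU` extrapolation -/

/-- `w > (≤, l)` where `l ∈ ℕ ∪ {−∞}` (`⊥` is `−∞`). -/
def gtLB (w : Weight) (l : WithBot ℕ) : Prop :=
  ∀ n : ℕ, l = (n : WithBot ℕ) → ovLt (some (n : ℤ)) w.val

/-- `−w > (≤, l)` where `l ∈ ℕ ∪ {−∞}`. -/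
def negGtLB (w : Weight) (l : WithBot ℕ) : Prop :=
  ∃ c : ℤ, w.val = some c ∧ ∀ n : ℕ, l = (n : WithBot ℕ) → c < -(n : ℤ)

/-- The weight `(<, −u)` for `u ∈ ℕ ∪ {−∞}` (with `(<,∞)` when `u = −∞`). -/
def wltNeg (u : WithBot ℕ) : Weight :=
  ⟨true, WithBot.recBotCoe none (fun n => some (-(n : ℤ))) u⟩

/-- The `Extra⁺_{LU}` extrapolation, applied edgewise to a distance graph `G`
(the canonical graph of a zone): `Z⁺_{xy} = (<,∞)` if `Z_{xy} > (≤,L_y)`, or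
`−Z_{y0} > (≤,L_y)`, or `−Z_{x0} > (≤,U_x)` and `y ≠ x₀`;
`Z⁺_{x0} = (<,−U_x)` if `−Z_{x0} > (≤,U_x)`; and `Z⁺_{xy} = Z_{xy}` otherwise. -/
def extraLU {X : Type*} (L U : X → WithBot ℕ) (G : DGraph X) : DGraph X := fun a b =>
  match a, b with
  | some x, some y =>
      if gtLB (G (some x) (some y)) (L y) ∨ negGtLB (G (some y) none) (L y) ∨
          negGtLB (G (some x) none) (U x)
      then winf else G (some x) (some y)
  | none, some y =>
      if gtLB (G none (some y)) (L y) ∨ negGtLB (G (some y) none) (L y)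
      then winf else G none (some y)
  | some x, none =>
      if negGtLB (G (some x) none) (U x) then wltNeg (U x) else G (some x) none
  | none, none => G none none

/-! ### LU-preorder and its abstraction -/

/-- `l < r` where `l ∈ ℕ ∪ {−∞}` and `r : ℝ`. -/
def lbLtR (l : WithBot ℕ) (r : ℝ) : Prop := ∀ n : ℕ, l = (n : WithBot ℕ) → (n : ℝ) < r

/-- The LU-preorder `ν' ≼_{LU} ν`: for each clock `x`, either `ν' x = ν x`,
or `L x < ν' x < ν x`, or `U x < ν x < ν' x`. -/
def LUpre {X : Type*} (L U : X → WithBot ℕ) (ν' ν : Val X) : Prop :=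
  ∀ x, ν' x = ν x ∨ (lbLtR (L x) (ν' x) ∧ ν' x < ν x) ∨ (lbLtR (U x) (ν x) ∧ ν x < ν' x)

/-- The abstraction `a_{≼LU}(W) = { ν | ∃ ν' ∈ W, ν' ≼_{LU} ν }` (inside the
nonnegative valuations). -/
def aLU {X : Type*} (L U : X → WithBot ℕ) (W : Set (Val X)) : Set (Val X) :=
  { ν | Nonneg ν ∧ ∃ ν' ∈ W, LUpre L U ν' ν }

/-! ### Guards, transitions, timed automata -/

/-- Comparison operators `# ∈ {<, ≤, =, ≥, >}`. -/
inductive Cmp | lt | le | eq | ge | gt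
deriving DecidableEq

/-- Satisfaction of a comparison by real numbers. -/
def Cmp.sat : Cmp → ℝ → ℝ → Prop
  | .lt, a, b => a < b
  | .le, a, b => a ≤ b
  | .eq, a, b => a = b
  | .ge, a, b => a ≥ b
  | .gt, a, b => a > b

/-- A clock constraint (guard): a conjunction (list) of constraints `x # c`, `c ∈ ℕ`. -/
abbrev Guard (X : Type*) := List (X × Cmp × ℕ)

/-- `v ⊨ g`: every conjunct of the guard holds. -/
def gsat {X : Type*} (v : Val X) (g : Guard X) : Prop :=
  ∀ p ∈ g, Cmp.sat p.2.1 (v p.1) (p.2.2 : ℝ)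

/-- `[R]v`: reset the clocks in `R` to `0`, leaving the others unchanged. -/
def resetVal {X : Type*} (R : Set X) (v : Val X) : Val X := Set.indicator Rᶜ v

/-- One step `ν →^{δ,t} ν'` for a transition with guard `g` and reset set `R`:
`ν + δ ⊨ g` and `ν' = [R](ν + δ)`. -/
def step {X : Type*} (g : Guard X) (R : Set X) (δ : ℝ) (ν ν' : Val X) : Prop :=
  0 ≤ δ ∧ gsat (fun x => ν x + δ) g ∧ ν' = resetVal R (fun x => ν x + δ)

/-- `Post(S,t)`: all valuations reachable by the transition from valuations in `S`. -/
def Post {X : Type*} (g : Guard X) (R : Set X) (S : Set (Val X)) : Set (Val X) :=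
  { ν' | ∃ ν ∈ S, ∃ δ : ℝ, step g R δ ν ν' }

/-- A timed automaton `(Q, q₀, X, T, Acc)`. -/
structure TimedAuto (Q X : Type*) where
  init : Q
  trans : Set (Q × Guard X × Set X × Q)
  acc : Set Q

/-- `(q,ν) →^{δ,t} (q',ν')` for a transition `t = (q,g,R,q')` of the automaton. -/
def TimedAuto.cstep {Q X : Type*} (A : TimedAuto Q X) (t : Q × Guard X × Set X × Q)
    (δ : ℝ) (c c' : Q × Val X) : Prop :=
  t ∈ A.trans ∧ c.1 = t.1 ∧ c'.1 = t.2.2.2 ∧ step t.2.1 t.2.2.1 δ c.2 c'.2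

/-- Pointwise minimum of two distance graphs. -/
def minG {X : Type*} (G₁ G₂ : DGraph X) : DGraph X :=
  fun a b => if (G₁ a b).lt (G₂ a b) then G₁ a b else G₂ a b


/-! A clock bounded on a region `R` cannot exceed `α` there, since above `α` a region is
unbounded in that clock. So `R` fixes the integer parts of `x₁, x₂` and the order of their
fractional parts, and `x₂ − x₁` is either a constant integer `d` on `R` or ranges over
`(d, d + 1)`. The canonical graph thus gives `x₁ → x₂` and `x₂ → x₁` weights at most
`(≤, d), (≤, −d)` or `(<, d + 1), (<, −d)`, and a weight strictly below the first, added to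
the second, is at most `(<, 0)`. -/

namespace Weight

lemma lt_trans {a b c : Weight} (hab : a.lt b) (hbc : b.lt c) : a.lt c := by
  obtain ⟨sa, va⟩ := a; obtain ⟨sb, vb⟩ := b; obtain ⟨sc, vc⟩ := c
  cases va <;> cases vb <;> cases vc <;> cases sa <;> cases sb <;> cases sc <;>
    simp_all [Weight.lt, ovLt] <;> omega

lemma lt_asymm {a b : Weight} (hab : a.lt b) : ¬ b.lt a := by
  obtain ⟨sa, va⟩ := a; obtain ⟨sb, vb⟩ := b
  cases va <;> cases vb <;> cases sa <;> cases sb <;> simp_all [Weight.lt, ovLt] <;> omega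

lemma le_of_not_lt {a b : Weight} (h : ¬ a.lt b) : b.le a := by
  obtain ⟨sa, va⟩ := a; obtain ⟨sb, vb⟩ := b
  cases va <;> cases vb <;> cases sa <;> cases sb <;>
    simp_all [Weight.lt, Weight.le, ovLt] <;> omega

lemma lt_of_lt_of_le {a b c : Weight} (hab : a.lt b) (hbc : b.le c) : a.lt c := by
  rcases hbc with hbc | rfl
  exacts [lt_trans hab hbc, hab]

lemma le_trans {a b c : Weight} (hab : a.le b) (hbc : b.le c) : a.le c := by
  rcases hab with hab | rfl
  exacts [Or.inl (lt_of_lt_of_le hab hbc), hbc]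

lemma add_le_wlt_zero_of_lt_wle {w w' : Weight} {d : ℤ} (hw : w.lt (wle d))
    (hw' : w'.le (wle (-d))) : (w.add w').le (wlt 0) := by
  obtain ⟨s, v⟩ := w; obtain ⟨s', v'⟩ := w'
  cases v <;> cases v' <;> cases s <;> cases s' <;>
    simp_all [Weight.lt, Weight.le, Weight.add, ovLt, ovAdd, wle, wlt] <;> omega

lemma add_le_wlt_zero_of_lt_wlt {w w' : Weight} {d : ℤ} (hw : w.lt (wlt (d + 1)))
    (hw' : w'.le (wlt (-d))) : (w.add w').le (wlt 0) := by
  obtain ⟨s, v⟩ := w; obtain ⟨s', v'⟩ := w'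
  cases v <;> cases v' <;> cases s <;> cases s' <;>
    simp_all [Weight.lt, Weight.le, Weight.add, ovLt, ovAdd, wlt] <;> omega

end Weight

section minG

variable {X : Type*} (G₁ G₂ : DGraph X) (a b : Vtx X)

lemma minG_eq_right_of_lt (h : (G₂ a b).lt (G₁ a b)) : minG G₁ G₂ a b = G₂ a b :=
  if_neg (Weight.lt_asymm h)

lemma minG_le_left : (minG G₁ G₂ a b).le (G₁ a b) := by
  unfold minG
  split_ifs with h
  exacts [Or.inr rfl, Weight.le_of_not_lt h]

end minG

lemma sub_eq_floor_sub_floor_of_fract_eq {a b : ℝ} (h : Int.fract a = Int.fract b) :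
    b - a = ⌊b⌋ - ⌊a⌋ := by
  linarith [Int.floor_add_fract a, Int.floor_add_fract b]

lemma sub_mem_Ioo_floor_sub_floor_of_fract_lt {a b : ℝ} (h : Int.fract a < Int.fract b) :
    b - a ∈ Set.Ioo ((⌊b⌋ - ⌊a⌋ : ℤ) : ℝ) ((⌊b⌋ - ⌊a⌋ : ℤ) + 1) := by
  push_cast
  constructor <;> linarith [Int.floor_add_fract a, Int.floor_add_fract b,
    Int.fract_nonneg a, Int.fract_lt_one b]

section Region

variable {X : Type*} {α : X → ℕ} {v₀ : Val X}

lemma regEq_refl (α : X → ℕ) (v : Val X) : regEq α v v :=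
  ⟨fun _ => Or.inr ⟨rfl, Iff.rfl⟩, fun _ _ _ _ => Iff.rfl⟩

lemma le_alpha_of_bounded (hv₀ : Nonneg v₀) {x : X}
    (hbdd : ∃ c : ℕ, ∀ v ∈ {w | Nonneg w ∧ regEq α v₀ w}, v x ≤ (c : ℝ)) :
    v₀ x ≤ α x := by
  obtain ⟨c, hc⟩ := hbdd
  by_contra! hgt
  set u := Function.update v₀ x (v₀ x + c + 1)
  have hux : u x = v₀ x + c + 1 := Function.update_self ..
  have huy : ∀ y ≠ x, u y = v₀ y := fun y hy => Function.update_of_ne hy ..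
  have hu : u ∈ {w | Nonneg w ∧ regEq α v₀ w} := by
    refine ⟨fun y => ?_, fun y => ?_, fun y z hy hz => ?_⟩
    · rcases eq_or_ne y x with rfl | hy
      · rw [hux]; linarith [hv₀ y, c.cast_nonneg (α := ℝ)]
      · rw [huy y hy]; exact hv₀ y
    · rcases eq_or_ne y x with rfl | hy
      · exact Or.inl ⟨hgt, by rw [hux]; linarith [c.cast_nonneg (α := ℝ)]⟩
      · rw [huy y hy]; exact (regEq_refl α v₀).1 y
    · rw [huy y (by rintro rfl; linarith), huy z (by rintro rfl; linarith)]
  linarith [hc u hu, hv₀ x]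

lemma floor_eq_of_regEq {v : Val X} (h : regEq α v₀ v) {x : X} (hx : v₀ x ≤ α x) :
    ⌊v x⌋ = ⌊v₀ x⌋ := by
  rcases h.1 x with ⟨hlt, -⟩ | ⟨hfl, -⟩
  exacts [absurd hx (not_le.mpr hlt), hfl.symm]

lemma sub_const_or_mem_Ioo_of_regEq {x₁ x₂ : X} (h₁ : v₀ x₁ ≤ α x₁) (h₂ : v₀ x₂ ≤ α x₂) :
    ∃ d : ℤ, (∀ v, regEq α v₀ v → v x₂ - v x₁ = d) ∨
      (∀ v, regEq α v₀ v → v x₂ - v x₁ ∈ Set.Ioo (d : ℝ) (d + 1)) := by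
  have hfl : ∀ v, regEq α v₀ v → ⌊v x₁⌋ = ⌊v₀ x₁⌋ ∧ ⌊v x₂⌋ = ⌊v₀ x₂⌋ :=
    fun v hv => ⟨floor_eq_of_regEq hv h₁, floor_eq_of_regEq hv h₂⟩
  have h₁₂ : ∀ v, regEq α v₀ v →
      (Int.fract (v₀ x₁) ≤ Int.fract (v₀ x₂) ↔ Int.fract (v x₁) ≤ Int.fract (v x₂)) :=
    fun v hv => hv.2 x₁ x₂ h₁ h₂
  have h₂₁ : ∀ v, regEq α v₀ v →
      (Int.fract (v₀ x₂) ≤ Int.fract (v₀ x₁) ↔ Int.fract (v x₂) ≤ Int.fract (v x₁)) :=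
    fun v hv => hv.2 x₂ x₁ h₂ h₁
  rcases lt_trichotomy (Int.fract (v₀ x₁)) (Int.fract (v₀ x₂)) with hlt | heq | hgt
  · refine ⟨⌊v₀ x₂⌋ - ⌊v₀ x₁⌋, Or.inr fun v hv => ?_⟩
    have hvlt : Int.fract (v x₁) < Int.fract (v x₂) :=
      lt_of_not_ge fun hle => hlt.not_ge ((h₂₁ v hv).mpr hle)
    simpa [(hfl v hv).1, (hfl v hv).2] using sub_mem_Ioo_floor_sub_floor_of_fract_lt hvlt
  · refine ⟨⌊v₀ x₂⌋ - ⌊v₀ x₁⌋, Or.inl fun v hv => ?_⟩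
    have hveq : Int.fract (v x₁) = Int.fract (v x₂) :=
      le_antisymm ((h₁₂ v hv).mp heq.le) ((h₂₁ v hv).mp heq.ge)
    rw [sub_eq_floor_sub_floor_of_fract_eq hveq, (hfl v hv).1, (hfl v hv).2]
    push_cast; rfl
  · refine ⟨⌊v₀ x₂⌋ - ⌊v₀ x₁⌋ - 1, Or.inr fun v hv => ?_⟩
    have hvlt : Int.fract (v x₂) < Int.fract (v x₁) :=
      lt_of_not_ge fun hle => hgt.not_ge ((h₁₂ v hv).mpr hle)
    obtain ⟨hlo, hhi⟩ := sub_mem_Ioo_floor_sub_floor_of_fract_lt hvlt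
    rw [(hfl v hv).1, (hfl v hv).2] at hlo hhi
    push_cast at hlo hhi ⊢
    constructor <;> linarith

end Region

section Bounds

variable {X : Type*} {S : Set (Val X)} {x y : X} {d : ℤ}

lemma bounds_wle_of_sub_eq (h : ∀ v ∈ S, v y - v x = d) :
    Bounds S (some x) (some y) (wle d) ∧ Bounds S (some y) (some x) (wle (-d)) := by
  refine ⟨fun v hv => ?_, fun v hv => ?_⟩ <;>
    simp only [Weight.sat, wle, extV, Bool.false_eq_true, if_false, Int.cast_neg] <;>
    linarith [h v hv]

lemma bounds_wlt_of_sub_mem_Ioo (h : ∀ v ∈ S, v y - v x ∈ Set.Ioo (d : ℝ) (d + 1)) :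
    Bounds S (some x) (some y) (wlt (d + 1)) ∧ Bounds S (some y) (some x) (wlt (-d)) := by
  refine ⟨fun v hv => ?_, fun v hv => ?_⟩ <;>
    simp only [Weight.sat, wlt, extV, if_true, Int.cast_neg, Int.cast_add, Int.cast_one] <;>
    linarith [(h v hv).1, (h v hv).2]

end Bounds

theorem stmt5_general {X : Type*} (α : X → ℕ) (R : Set (Val X))
    (hR : IsRegion α R) (GR : DGraph X) (hGR : IsCanonGraph GR R)
    (x₁ x₂ : X)
    (h1 : ∃ c : ℕ, ∀ v ∈ R, v x₁ ≤ (c : ℝ))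
    (h2 : ∃ c : ℕ, ∀ v ∈ R, v x₂ ≤ (c : ℝ))
    (G : DGraph X)
    (hedge : (G (some x₁) (some x₂)).lt (GR (some x₁) (some x₂))) :
    ((minG GR G (some x₁) (some x₂)).add (minG GR G (some x₂) (some x₁))).le (wlt 0) := by
  obtain ⟨v₀, hv₀, rfl⟩ := hR
  have hback := minG_le_left GR G (some x₂) (some x₁)
  rw [minG_eq_right_of_lt GR G _ _ hedge]
  obtain ⟨d, hconst | hIoo⟩ :=
    sub_const_or_mem_Ioo_of_regEq (le_alpha_of_bounded hv₀ h1) (le_alpha_of_bounded hv₀ h2)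
  · obtain ⟨hp, hq⟩ := bounds_wle_of_sub_eq fun v (hv : _ ∧ _) => hconst v hv.2
    exact Weight.add_le_wlt_zero_of_lt_wle (Weight.lt_of_lt_of_le hedge (hGR.2 _ _ _ hp))
      (Weight.le_trans hback (hGR.2 _ _ _ hq))
  · obtain ⟨hp, hq⟩ := bounds_wlt_of_sub_mem_Ioo fun v (hv : _ ∧ _) => hIoo v hv.2
    exact Weight.add_le_wlt_zero_of_lt_wlt (Weight.lt_of_lt_of_le hedge (hGR.2 _ _ _ hp))
      (Weight.le_trans hback (hGR.2 _ _ _ hq))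

/-- If `x₁, x₂` are bounded in the region `R` and in `min(G_R, G)`
the weight of the edge `x₁ → x₂` comes from `G` (is strictly smaller than in `G_R`),
then `x₁ → x₂ → x₁` is a negative cycle in `min(G_R, G)`. -/
theorem stmt5 {X : Type*} [Fintype X] (α : X → ℕ) (R : Set (Val X))
    (hR : IsRegion α R) (GR : DGraph X) (hGR : IsCanonGraph GR R)
    (x₁ x₂ : X)
    (h1 : ∃ c : ℕ, ∀ v ∈ R, v x₁ ≤ (c : ℝ))
    (h2 : ∃ c : ℕ, ∀ v ∈ R, v x₂ ≤ (c : ℝ))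
    (G : DGraph X)
    (hedge : (G (some x₁) (some x₂)).lt (GR (some x₁) (some x₂))) :
    ((minG GR G (some x₁) (some x₂)).add (minG GR G (some x₂) (some x₁))).le (wlt 0) :=
  stmt5_general α R hR GR hGR x₁ x₂ h1 h2 G hedge

end TAform

end
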